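/- For b ≤ 0 let N_b* denote the unique solution of N·I(b,N) = 1. Then b ↦ N_b* is strictly increasing on (−∞,0]: if b₁ < b₂ ≤ 0 then N_{b₁}* < N_{b₂}*. -/

import Mathlib

open MeasureTheory Real Filter

/-- The function `I(b,N)` from the NNLIF model, with explicit dependence on the
connectivity parameter `b`. -/
noncomputable def Ifun (V_R V_F b N : ℝ) : ℝ :=
  ∫ v in Set.Iic V_F,
    Real.exp (-(v - b * N) ^ 2 / 2) * ∫ w in (max v V_R)..V_F, Real.exp ((w - b * N) ^ 2 / 2)

/-!
The integral `I(b, N)` depends only on `μ = b N`. Exchanging the order of integration writes it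
as `∫_{V_R}^{V_F} R(μ - w) dw`, where `R` is the Gaussian Mills ratio; the Laplace form
`R(x) = ∫_0^∞ e^{-x u - u²/2} du` shows that `R` is strictly decreasing, hence so is `I` as a
function of `μ`. If `b₁ < b₂ ≤ 0` but `N₁ ≥ N₂`, then `b₁ N₁ ≤ b₁ N₂ < b₂ N₂`, so
`N₂ I(b₂, N₂) < N₁ I(b₁, N₁)`, contradicting that both products equal `1`.
-/

open Set

theorem setIntegral_lt_setIntegral_of_lt {α : Type*} [MeasurableSpace α] {μ : Measure α}
    {s : Set α} {f g : α → ℝ} (hs : MeasurableSet s) (hμs : μ s ≠ 0)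
    (hf : IntegrableOn f s μ) (hg : IntegrableOn g s μ) (hlt : ∀ x ∈ s, f x < g x) :
    ∫ x in s, f x ∂μ < ∫ x in s, g x ∂μ := by
  rw [← sub_pos, ← integral_sub hg hf, setIntegral_pos_iff_support_of_nonneg_ae
    ((ae_restrict_iff' hs).2 (ae_of_all _ fun x hx => sub_nonneg.2 (hlt x hx).le)) (hg.sub hf)]
  rwa [inter_eq_self_of_subset_right fun x hx => Function.mem_support.2 (sub_pos.2 (hlt x hx)).ne',
    pos_iff_ne_zero]

theorem integral_Iic_mul_intervalIntegral_max {f g : ℝ → ℝ} {a c : ℝ} (hac : a ≤ c)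
    (hf : IntegrableOn f (Iic c)) (hg : IntegrableOn g (Ioc a c)) :
    ∫ v in Iic c, f v * ∫ w in (max v a)..c, g w = ∫ w in Ioc a c, g w * ∫ v in Iio w, f v := by
  set F : ℝ → ℝ → ℝ := fun v w => if v < w then f v * g w else 0
  have hF : Integrable (Function.uncurry F)
      ((volume.restrict (Iic c)).prod (volume.restrict (Ioc a c))) :=
    (hf.mul_prod hg).indicator (measurableSet_lt measurable_fst measurable_snd)
  calc ∫ v in Iic c, f v * ∫ w in (max v a)..c, g w
      = ∫ v in Iic c, ∫ w in Ioc a c, F v w := by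
        refine setIntegral_congr_fun measurableSet_Iic fun v hv => ?_
        have hslice : Ioc a c ∩ Ioi v = Ioc (max v a) c := by
          ext w; simp only [mem_inter_iff, mem_Ioc, mem_Ioi, max_lt_iff]; tauto
        rw [intervalIntegral.integral_of_le (max_le hv hac), ← integral_const_mul, ← hslice,
          ← setIntegral_indicator measurableSet_Ioi]
        refine setIntegral_congr_fun measurableSet_Ioc fun w _ => ?_
        by_cases h : v < w <;> simp [F, h]
    _ = ∫ w in Ioc a c, ∫ v in Iic c, F v w := integral_integral_swap hF
    _ = ∫ w in Ioc a c, g w * ∫ v in Iio w, f v := by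
        refine setIntegral_congr_fun measurableSet_Ioc fun w hw => ?_
        have hslice : Iic c ∩ Iio w = Iio w := inter_eq_self_of_subset_right
          fun v hv => (mem_Iio.1 hv).le.trans hw.2
        rw [← integral_const_mul, ← hslice, ← setIntegral_indicator measurableSet_Iio]
        refine setIntegral_congr_fun measurableSet_Iic fun v _ => ?_
        by_cases h : v < w <;> simp [F, h, mul_comm]

/-- The Mills ratio `(1 - Φ x) / φ x` of the standard normal distribution. -/
noncomputable def millsRatio (x : ℝ) : ℝ :=
  exp (x ^ 2 / 2) * ∫ t in Ioi x, exp (-t ^ 2 / 2)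

theorem millsRatio_nonneg (x : ℝ) : 0 ≤ millsRatio x :=
  mul_nonneg (exp_nonneg _) (setIntegral_nonneg measurableSet_Ioi fun _ _ => exp_nonneg _)

theorem integrable_exp_neg_sub_sq_div_two (μ : ℝ) :
    Integrable fun v : ℝ => exp (-(v - μ) ^ 2 / 2) := by
  refine ((integrable_exp_neg_mul_sq (b := 1 / 2) (by norm_num)).comp_sub_right μ).congr
    (ae_of_all _ fun v => ?_)
  simp only
  ring_nf

theorem integrable_exp_neg_mul_sub_sq_div_two (x : ℝ) :
    Integrable fun u : ℝ => exp (-(x * u) - u ^ 2 / 2) := by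
  refine ((integrable_exp_neg_sub_sq_div_two (-x)).const_mul (exp (x ^ 2 / 2))).congr
    (ae_of_all _ fun u => ?_)
  simp only [← exp_add]
  ring_nf

theorem millsRatio_eq_integral (x : ℝ) :
    millsRatio x = ∫ u in Ioi 0, exp (-(x * u) - u ^ 2 / 2) := by
  have hshift := (measurePreserving_add_right volume x).setIntegral_preimage_emb
    (measurableEmbedding_addRight x) (fun t => exp (-t ^ 2 / 2)) (Ioi x)
  rw [preimage_add_const_Ioi, sub_self] at hshift
  rw [millsRatio, ← hshift, ← integral_const_mul]
  refine setIntegral_congr_fun measurableSet_Ioi fun u _ => ?_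
  simp only [← exp_add]
  ring_nf

theorem millsRatio_strictAnti : StrictAnti millsRatio := by
  intro x₁ x₂ hx
  simp only [millsRatio_eq_integral]
  refine setIntegral_lt_setIntegral_of_lt measurableSet_Ioi (by simp)
    (integrable_exp_neg_mul_sub_sq_div_two x₂).integrableOn
    (integrable_exp_neg_mul_sub_sq_div_two x₁).integrableOn fun u hu => ?_
  have : x₁ * u < x₂ * u := mul_lt_mul_of_pos_right hx hu
  gcongr

theorem exp_mul_integral_Iio_exp_neg_sub_sq (w μ : ℝ) :
    exp ((w - μ) ^ 2 / 2) * ∫ v in Iio w, exp (-(v - μ) ^ 2 / 2) = millsRatio (μ - w) := by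
  have hreflect := (Measure.measurePreserving_sub_left volume μ).setIntegral_preimage_emb
    (MeasurableEquiv.subLeft μ).measurableEmbedding (fun v => exp (-(v - μ) ^ 2 / 2)) (Iio w)
  rw [preimage_const_sub_Iio] at hreflect
  rw [millsRatio, ← hreflect]
  congr 1
  · ring_nf
  · refine setIntegral_congr_fun measurableSet_Ioi fun t _ => ?_
    ring_nf

theorem Ifun_eq_integral_millsRatio {V_R V_F : ℝ} (hV : V_R ≤ V_F) (b N : ℝ) :
    Ifun V_R V_F b N = ∫ w in Ioc V_R V_F, millsRatio (b * N - w) := by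
  rw [Ifun, integral_Iic_mul_intervalIntegral_max hV
    (integrable_exp_neg_sub_sq_div_two _).integrableOn (by fun_prop : Continuous _).integrableOn_Ioc]
  exact setIntegral_congr_fun measurableSet_Ioc fun w _ => exp_mul_integral_Iio_exp_neg_sub_sq w _

theorem strictAnti_integral_millsRatio_sub {a c : ℝ} (hac : a < c) :
    StrictAnti fun μ => ∫ w in Ioc a c, millsRatio (μ - w) := by
  have hint (μ : ℝ) : IntegrableOn (fun w => millsRatio (μ - w)) (Ioc a c) := by
    have hmono : Monotone fun w => millsRatio (μ - w) :=
      millsRatio_strictAnti.antitone.comp fun _ _ h => sub_le_sub_left h μ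
    exact (hmono.monotoneOn _).integrableOn_isCompact isCompact_Icc |>.mono_set Ioc_subset_Icc_self
  intro μ₁ μ₂ hμ
  exact setIntegral_lt_setIntegral_of_lt measurableSet_Ioc (by simp [hac]) (hint μ₂) (hint μ₁)
    fun w _ => millsRatio_strictAnti (sub_lt_sub_right hμ w)

theorem Ifun_nonneg {V_R V_F : ℝ} (hV : V_R ≤ V_F) (b N : ℝ) : 0 ≤ Ifun V_R V_F b N := by
  rw [Ifun_eq_integral_millsRatio hV]
  exact setIntegral_nonneg measurableSet_Ioc fun w _ => millsRatio_nonneg _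

theorem Ifun_lt_Ifun_of_mul_lt {V_R V_F b₁ b₂ N₁ N₂ : ℝ} (hV : V_R < V_F)
    (h : b₁ * N₁ < b₂ * N₂) : Ifun V_R V_F b₂ N₂ < Ifun V_R V_F b₁ N₁ := by
  simpa only [Ifun_eq_integral_millsRatio hV.le] using strictAnti_integral_millsRatio_sub hV h

/-- For `b ≤ 0` let `N_b*` be the unique solution of `N·I(b,N) = 1`. Then `b ↦ N_b*` is
strictly increasing on `(−∞, 0]`. -/
theorem Nstar_strictMonoOn (V_R V_F : ℝ) (hV : V_R < V_F)
    (Nstar : ℝ → ℝ)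
    (hNstar : ∀ b : ℝ, b ≤ 0 →
      0 < Nstar b ∧ Nstar b * Ifun V_R V_F b (Nstar b) = 1 ∧
      ∀ N : ℝ, 0 < N → N * Ifun V_R V_F b N = 1 → N = Nstar b) :
    StrictMonoOn Nstar (Set.Iic 0) := by
  intro b₁ hb₁ b₂ hb₂ hb
  obtain ⟨hN₁, hI₁, -⟩ := hNstar b₁ hb₁
  obtain ⟨hN₂, hI₂, -⟩ := hNstar b₂ hb₂
  by_contra! hN
  have hμ : b₁ * Nstar b₁ < b₂ * Nstar b₂ := calc
    b₁ * Nstar b₁ ≤ b₁ * Nstar b₂ := mul_le_mul_of_nonpos_left hN (hb.le.trans hb₂)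
    _ < b₂ * Nstar b₂ := mul_lt_mul_of_pos_right hb hN₂
  have : Nstar b₂ * Ifun V_R V_F b₂ (Nstar b₂) < Nstar b₁ * Ifun V_R V_F b₁ (Nstar b₁) := calc
    _ ≤ Nstar b₁ * Ifun V_R V_F b₂ (Nstar b₂) :=
      mul_le_mul_of_nonneg_right hN (Ifun_nonneg hV.le _ _)
    _ < Nstar b₁ * Ifun V_R V_F b₁ (Nstar b₁) :=
      mul_lt_mul_of_pos_left (Ifun_lt_Ifun_of_mul_lt hV hμ) hN₁
  linarith
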